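/- Let p ≥ 2, μ ∈ [0,1], and let g be a C² scalar function on an open set of ℝⁿ. With V_p(ξ) = (μ² + |ξ|²)^{(p−2)/4} ξ, there is a constant C = C(p) such that C^{−1} |D²g|² (μ² + |Dg|²)^{(p−2)/2} ≤ |D(V_p(Dg))|² ≤ C |D²g|² (μ² + |Dg|²)^{(p−2)/2} pointwise. -/

import Mathlib

/-!
Write `s = μ² + |ξ|²` and `α = (p - 2) / 4 ≥ 0`. The derivative of `V(ξ) = s^α ξ` is
`DV(ξ) h = s^α h + 2α s^(α-1) ⟨ξ, h⟩ ξ`, a nonnegative rank-one perturbation of `s^α · id`.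
Testing against `h` gives `s^α |h| ≤ |DV(ξ) h|`, and `2α s^(α-1) |ξ|² ≤ 2α s^α` gives
`|DV(ξ)| ≤ (1 + 2α) s^α = (p/2) s^α`. By the chain rule `D(V(Dg)) = DV(Dg) ∘ D²g`, so
`s^α |D²g| ≤ |D(V(Dg))| ≤ (p/2) s^α |D²g|`, and squaring gives the estimate with `C = (p/2)²`.
-/

open Real Asymptotics InnerProductSpace Filter Topology
open scoped RealInnerProductSpace

theorem Real.rpow_sub_one_mul_le {s t : ℝ} (α : ℝ) (ht : 0 ≤ t) (hts : t ≤ s) :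
    s ^ (α - 1) * t ≤ s ^ α := by
  rcases (ht.trans hts).eq_or_lt with rfl | hs
  · simp [le_antisymm hts ht, zero_rpow_nonneg]
  · calc s ^ (α - 1) * t ≤ s ^ (α - 1) * s := by gcongr
      _ = s ^ α := by rw [← rpow_add_one hs.ne', sub_add_cancel]

theorem ContinuousLinearMap.mul_opNorm_le_opNorm_comp {𝕜 E F G : Type*}
    [NontriviallyNormedField 𝕜] [SeminormedAddCommGroup E] [SeminormedAddCommGroup F]
    [SeminormedAddCommGroup G] [NormedSpace 𝕜 E] [NormedSpace 𝕜 F] [NormedSpace 𝕜 G]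
    {M : F →L[𝕜] G} {c : ℝ} (hc : 0 ≤ c) (hM : ∀ h, c * ‖h‖ ≤ ‖M h‖) (A : E →L[𝕜] F) :
    c * ‖A‖ ≤ ‖M.comp A‖ := by
  rcases hc.eq_or_lt with rfl | hc
  · simp
  rw [← le_div_iff₀' hc]
  refine A.opNorm_le_bound (by positivity) fun h => ?_
  rw [div_mul_eq_mul_div, le_div_iff₀' hc]
  exact (hM (A h)).trans ((M.comp A).le_opNorm h)

section

variable {E : Type*} [NormedAddCommGroup E] [InnerProductSpace ℝ E]

/-- The vector field `ξ ↦ (μ² + |ξ|²)^α ξ`; the paper's `V_p` is `vField μ ((p - 2) / 4)`. -/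
noncomputable def vField (μ α : ℝ) (ξ : E) : E := (μ ^ 2 + ‖ξ‖ ^ 2) ^ α • ξ

noncomputable def vFieldDeriv (μ α : ℝ) (ξ : E) : E →L[ℝ] E :=
  (μ ^ 2 + ‖ξ‖ ^ 2) ^ α • ContinuousLinearMap.id ℝ E +
    (2 * α * (μ ^ 2 + ‖ξ‖ ^ 2) ^ (α - 1)) • (innerSL ℝ ξ).smulRight ξ

theorem vFieldDeriv_apply (μ α : ℝ) (ξ h : E) :
    vFieldDeriv μ α ξ h =
      (μ ^ 2 + ‖ξ‖ ^ 2) ^ α • h + (2 * α * (μ ^ 2 + ‖ξ‖ ^ 2) ^ (α - 1) * ⟪ξ, h⟫) • ξ := by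
  simp [vFieldDeriv, mul_smul]

theorem hasFDerivAt_vField_zero {α : ℝ} (hα : 0 < α) :
    HasFDerivAt (vField 0 α) (0 : E →L[ℝ] E) 0 := by
  rw [hasFDerivAt_iff_isLittleO_nhds_zero]
  have hweight : Tendsto (fun y : E => (0 ^ 2 + ‖y‖ ^ 2) ^ α) (𝓝 0) (𝓝 0) := by
    have hcont : Continuous fun y : E => (0 ^ 2 + ‖y‖ ^ 2) ^ α :=
      (continuous_const.add (continuous_norm.pow 2)).rpow_const fun _ => Or.inr hα.le
    simpa [zero_rpow hα.ne'] using hcont.tendsto 0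
  simpa [vField] using
    (isLittleO_one_iff ℝ).2 hweight |>.smul_isBigO (isBigO_refl (fun y : E => y) _)

theorem hasFDerivAt_vField (μ : ℝ) {α : ℝ} (hα : 0 ≤ α) (ξ : E) :
    HasFDerivAt (vField μ α) (vFieldDeriv μ α ξ) ξ := by
  -- At `μ = 0, ξ = 0` the weight need not be differentiable, but `V` is and the formula survives.
  by_cases hs : μ ^ 2 + ‖ξ‖ ^ 2 = 0
  · obtain ⟨hμ, hξ⟩ := (add_eq_zero_iff_of_nonneg (sq_nonneg μ) (sq_nonneg ‖ξ‖)).1 hs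
    rw [sq_eq_zero_iff.1 hμ, norm_eq_zero.1 (sq_eq_zero_iff.1 hξ)]
    rcases hα.eq_or_lt with rfl | hα
    · have hid : vField 0 0 = (id : E → E) := funext fun ξ => by simp [vField]
      rw [hid]
      exact (hasFDerivAt_id 0).congr_fderiv (by ext h; simp [vFieldDeriv_apply])
    · simpa [vFieldDeriv, zero_rpow hα.ne'] using hasFDerivAt_vField_zero (E := E) hα
  · have hweight :=
      ((hasFDerivAt_id ξ).norm_sq.const_add (μ ^ 2)).rpow_const (p := α) (Or.inl hs)
    refine (hweight.smul (hasFDerivAt_id ξ)).congr_fderiv ?_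
    ext h
    simp [vFieldDeriv_apply]
    module

theorem mul_norm_le_norm_vFieldDeriv_apply (μ : ℝ) {α : ℝ} (hα : 0 ≤ α) (ξ h : E) :
    (μ ^ 2 + ‖ξ‖ ^ 2) ^ α * ‖h‖ ≤ ‖vFieldDeriv μ α ξ h‖ := by
  have hβ : 0 ≤ 2 * α * (μ ^ 2 + ‖ξ‖ ^ 2) ^ (α - 1) := by positivity
  have hcoercive : (μ ^ 2 + ‖ξ‖ ^ 2) ^ α * ‖h‖ ^ 2 ≤ ⟪vFieldDeriv μ α ξ h, h⟫ := by
    rw [vFieldDeriv_apply, inner_add_left, real_inner_smul_left, real_inner_smul_left,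
      real_inner_self_eq_norm_sq]
    nlinarith [mul_nonneg hβ (mul_self_nonneg ⟪ξ, h⟫)]
  rcases (norm_nonneg h).eq_or_lt with hh | hh
  · simp [← hh]
  · nlinarith [real_inner_le_norm (vFieldDeriv μ α ξ h) h]

theorem norm_vFieldDeriv_le (μ : ℝ) {α : ℝ} (hα : 0 ≤ α) (ξ : E) :
    ‖vFieldDeriv μ α ξ‖ ≤ (1 + 2 * α) * (μ ^ 2 + ‖ξ‖ ^ 2) ^ α := by
  refine ContinuousLinearMap.opNorm_le_bound _ (by positivity) fun h => ?_
  set s := μ ^ 2 + ‖ξ‖ ^ 2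
  have hβ₀ : 0 ≤ 2 * α * s ^ (α - 1) := by positivity
  have hβ : 2 * α * s ^ (α - 1) * ‖ξ‖ ^ 2 ≤ 2 * α * s ^ α := by
    rw [mul_assoc]
    gcongr
    exact rpow_sub_one_mul_le α (sq_nonneg _) (le_add_of_nonneg_left (sq_nonneg μ))
  calc ‖vFieldDeriv μ α ξ h‖
      ≤ s ^ α * ‖h‖ + 2 * α * s ^ (α - 1) * ‖⟪ξ, h⟫‖ * ‖ξ‖ := by
        rw [vFieldDeriv_apply]
        refine (norm_add_le _ _).trans_eq ?_
        rw [norm_smul, norm_smul, norm_mul, norm_of_nonneg hβ₀, norm_of_nonneg (by positivity)]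
    _ ≤ s ^ α * ‖h‖ + 2 * α * s ^ (α - 1) * (‖ξ‖ * ‖h‖) * ‖ξ‖ := by
        gcongr
        exact norm_inner_le_norm ξ h
    _ ≤ (1 + 2 * α) * s ^ α * ‖h‖ := by nlinarith [norm_nonneg h]

end

theorem ContDiffAt.differentiableAt_gradient {F : Type*} [NormedAddCommGroup F]
    [InnerProductSpace ℝ F] [CompleteSpace F] {g : F → ℝ} {x : F} (hg : ContDiffAt ℝ 2 g x) :
    DifferentiableAt ℝ (gradient g) x :=
  (toDual ℝ F).symm.comp_differentiableAt_iff.2 <|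
    (hg.fderiv_right (m := 1) (by norm_num)).differentiableAt one_ne_zero

theorem Vp_derivative_estimate_general (n : ℕ) (p μ : ℝ) (hp : 2 ≤ p)
    (Ω : Set (EuclideanSpace ℝ (Fin n))) (hΩ : IsOpen Ω)
    (g : EuclideanSpace ℝ (Fin n) → ℝ) (hg : ContDiffOn ℝ 2 g Ω) :
    ∃ C > 0, ∀ x ∈ Ω,
      C⁻¹ * ‖fderiv ℝ (gradient g) x‖ ^ 2 *
          (μ ^ 2 + ‖gradient g x‖ ^ 2) ^ ((p - 2) / 2) ≤
        ‖fderiv ℝ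
            (fun y => ((μ ^ 2 + ‖gradient g y‖ ^ 2) ^ ((p - 2) / 4)) • gradient g y)
            x‖ ^ 2 ∧
      ‖fderiv ℝ
          (fun y => ((μ ^ 2 + ‖gradient g y‖ ^ 2) ^ ((p - 2) / 4)) • gradient g y)
          x‖ ^ 2 ≤
        C * ‖fderiv ℝ (gradient g) x‖ ^ 2 *
          (μ ^ 2 + ‖gradient g x‖ ^ 2) ^ ((p - 2) / 2) := by
  have hα : 0 ≤ (p - 2) / 4 := by linarith
  refine ⟨(p / 2) ^ 2, by positivity, fun x hx => ?_⟩
  set A := fderiv ℝ (gradient g) x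
  set L := (vFieldDeriv μ ((p - 2) / 4) (gradient g x)).comp A
  set w := (μ ^ 2 + ‖gradient g x‖ ^ 2) ^ ((p - 2) / 4)
  have hchain : fderiv ℝ (fun y => (μ ^ 2 + ‖gradient g y‖ ^ 2) ^ ((p - 2) / 4) • gradient g y) x
      = L :=
    ((hasFDerivAt_vField μ hα _).comp x
      (hg.contDiffAt (hΩ.mem_nhds hx)).differentiableAt_gradient.hasFDerivAt).fderiv
  have hlow : w * ‖A‖ ≤ ‖L‖ :=
    ContinuousLinearMap.mul_opNorm_le_opNorm_comp (by positivity)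
      (mul_norm_le_norm_vFieldDeriv_apply μ hα _) A
  have hup : ‖L‖ ≤ p / 2 * (w * ‖A‖) :=
    calc ‖L‖ ≤ ‖vFieldDeriv μ ((p - 2) / 4) (gradient g x)‖ * ‖A‖ :=
          ContinuousLinearMap.opNorm_comp_le _ _
      _ ≤ (1 + 2 * ((p - 2) / 4)) * w * ‖A‖ := by gcongr; exact norm_vFieldDeriv_le μ hα _
      _ = p / 2 * (w * ‖A‖) := by ring
  have hsq : (μ ^ 2 + ‖gradient g x‖ ^ 2) ^ ((p - 2) / 2) = w ^ 2 := by
    rw [← rpow_mul_natCast (by positivity)]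
    ring_nf
  rw [hchain, hsq]
  have hC : ((p / 2) ^ 2)⁻¹ ≤ 1 := inv_le_one_of_one_le₀ (by nlinarith)
  constructor
  · calc ((p / 2) ^ 2)⁻¹ * ‖A‖ ^ 2 * w ^ 2 ≤ (w * ‖A‖) ^ 2 := by
          nlinarith [mul_nonneg (sq_nonneg ‖A‖) (sq_nonneg w)]
      _ ≤ ‖L‖ ^ 2 := by gcongr
  · calc ‖L‖ ^ 2 ≤ (p / 2 * (w * ‖A‖)) ^ 2 := by gcongr
      _ = (p / 2) ^ 2 * ‖A‖ ^ 2 * w ^ 2 := by ring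

/-- Pointwise comparison between `|D(V_p(Dg))|²` and `|D²g|² (μ² + |Dg|²)^((p-2)/2)`. -/
theorem Vp_derivative_estimate (n : ℕ) (p μ : ℝ) (hp : 2 ≤ p)
    (hμ : μ ∈ Set.Icc (0 : ℝ) 1)
    (Ω : Set (EuclideanSpace ℝ (Fin n))) (hΩ : IsOpen Ω)
    (g : EuclideanSpace ℝ (Fin n) → ℝ) (hg : ContDiffOn ℝ 2 g Ω) :
    ∃ C > 0, ∀ x ∈ Ω,
      C⁻¹ * ‖fderiv ℝ (gradient g) x‖ ^ 2 *
          (μ ^ 2 + ‖gradient g x‖ ^ 2) ^ ((p - 2) / 2) ≤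
        ‖fderiv ℝ
            (fun y => ((μ ^ 2 + ‖gradient g y‖ ^ 2) ^ ((p - 2) / 4)) • gradient g y)
            x‖ ^ 2 ∧
      ‖fderiv ℝ
          (fun y => ((μ ^ 2 + ‖gradient g y‖ ^ 2) ^ ((p - 2) / 4)) • gradient g y)
          x‖ ^ 2 ≤
        C * ‖fderiv ℝ (gradient g) x‖ ^ 2 *
          (μ ^ 2 + ‖gradient g x‖ ^ 2) ^ ((p - 2) / 2) :=
  Vp_derivative_estimate_general n p μ hp Ω hΩ g hg
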